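/- For β ≥ (1+√5)/2, the number 1 is the smallest positive element of Z_{-β}. -/

import Mathlib

/-- The `(-β)`-transformation `x ↦ -βx - ⌊β/(β+1) - βx⌋`. -/
noncomputable def Tm (β : ℝ) (x : ℝ) : ℝ := -β * x - ⌊β / (β + 1) - β * x⌋

/-- The set of `(-β)`-integers `Z_{-β} = ⋃_{n≥0} (-β)^n T_{-β}^{-n}(0)`. -/
noncomputable def Zm (β : ℝ) : Set ℝ :=
  {x | ∃ n : ℕ, x / (-β) ^ n ∈ Set.Ico (-β / (β + 1)) (1 / (β + 1)) ∧
    (Tm β)^[n] (x / (-β) ^ n) = 0}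

/-!
Write `I = [-β/(β+1), 1/(β+1))` and `z = x/(-β)^n ∈ I` with `T^n z = 0`. One step of `T` is
`z ↦ -βz` unless `βz ≤ -1/(β+1)`, so `(-β)^k z`, with `k` the number of remaining steps, is
unchanged along such steps. At the first step where the digit is nonzero, either it is the last
step, and then `-βz` is a positive integer, or at least three factors of `β` remain (two would make
`(-β)^2 z` negative) and `β^3 |z| ≥ β^2/(β+1) ≥ 1` since `β^2 ≥ β + 1`.
The bound is attained by `1 = -β · (-1/β)`, since `T(-1/β) = 0`.
-/

open Set

lemma Tm_eq_fract_sub (β x : ℝ) : Tm β x = Int.fract (β / (β + 1) - β * x) - β / (β + 1) := by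
  unfold Tm Int.fract
  ring

lemma div_add_one_div_self {β : ℝ} (hβ : β + 1 ≠ 0) : β / (β + 1) + 1 / (β + 1) = 1 := by
  rw [← add_div, div_self hβ]

lemma Tm_mem_Ico {β : ℝ} (hβ : β + 1 ≠ 0) (x : ℝ) :
    Tm β x ∈ Ico (-β / (β + 1)) (1 / (β + 1)) := by
  have hsum := div_add_one_div_self hβ
  have hlo := Int.fract_nonneg (β / (β + 1) - β * x)
  have hhi := Int.fract_lt_one (β / (β + 1) - β * x)
  rw [Tm_eq_fract_sub, neg_div]
  constructor <;> linarith

lemma Tm_eq_neg_mul {β z : ℝ} (hβ : β + 1 ≠ 0) (h₁ : -1 / (β + 1) < β * z)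
    (h₂ : β * z ≤ β / (β + 1)) : Tm β z = -β * z := by
  have hsum := div_add_one_div_self hβ
  have hdigit : ⌊β / (β + 1) - β * z⌋ = 0 := by
    rw [neg_div] at h₁
    rw [Int.floor_eq_zero_iff]
    constructor <;> linarith
  simp [Tm, hdigit]

lemma one_le_neg_mul_of_Tm_eq_zero {β z : ℝ} (hz : 0 < -β * z) (h : Tm β z = 0) :
    1 ≤ -β * z := by
  have hint : -β * z = ⌊β / (β + 1) - β * z⌋ := by
    unfold Tm at h
    linarith
  rw [hint] at hz ⊢
  exact_mod_cast Int.cast_pos.mp hz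

lemma neg_of_mul_le_neg_one_div {β z : ℝ} (hβ : 0 < β) (hz : β * z ≤ -1 / (β + 1)) : z < 0 := by
  have : 0 < 1 / (β + 1) := by positivity
  rw [neg_div] at hz
  nlinarith

lemma one_le_neg_pow_mul_of_mul_le {β z : ℝ} (hβ : 0 < β) (hgold : β + 1 ≤ β ^ 2)
    (hz : β * z ≤ -1 / (β + 1)) {k : ℕ} (hk : 3 ≤ k) (hpos : 0 < (-β) ^ k * z) :
    1 ≤ (-β) ^ k * z := by
  have hβ1 : 1 ≤ β := by nlinarith
  have hzβ : 1 / (β + 1) ≤ β * -z := by rw [neg_div] at hz; linarith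
  have hz0 := neg_of_mul_le_neg_one_div hβ hz
  calc (1 : ℝ) = (β + 1) * (1 / (β + 1)) := by field_simp
    _ ≤ β ^ 2 * (β * -z) := mul_le_mul hgold hzβ (by positivity) (by positivity)
    _ = β ^ 3 * |z| := by rw [abs_of_neg hz0]; ring
    _ ≤ β ^ k * |z| := by gcongr
    _ = |(-β) ^ k * z| := by rw [abs_mul, abs_pow, abs_neg, abs_of_pos hβ]
    _ = (-β) ^ k * z := abs_of_pos hpos

theorem one_le_neg_pow_mul_of_iterate_Tm_eq_zero {β : ℝ} (hβ : 0 < β) (hgold : β + 1 ≤ β ^ 2) :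
    ∀ (n : ℕ) {z : ℝ}, z ∈ Ico (-β / (β + 1)) (1 / (β + 1)) → (Tm β)^[n] z = 0 →
      0 < (-β) ^ n * z → 1 ≤ (-β) ^ n * z := by
  have hβ1 : β + 1 ≠ 0 := by positivity
  intro n
  induction n with
  | zero =>
    intro z _ h0 hpos
    simp_all
  | succ n ih =>
    intro z hz h0 hpos
    rw [Function.iterate_succ_apply] at h0
    by_cases hsmall : -1 / (β + 1) < β * z
    · have hβz : β * z ≤ β / (β + 1) := by
        rw [← mul_one_div]
        exact mul_le_mul_of_nonneg_left hz.2.le hβ.le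
      have hstep : (-β) ^ (n + 1) * z = (-β) ^ n * Tm β z := by
        rw [Tm_eq_neg_mul hβ1 hsmall hβz]
        ring
      rw [hstep] at hpos ⊢
      exact ih (Tm_mem_Ico hβ1 z) h0 hpos
    · rw [not_lt] at hsmall
      match n with
      | 0 =>
        rw [zero_add, pow_one] at hpos ⊢
        exact one_le_neg_mul_of_Tm_eq_zero hpos h0
      | 1 =>
        have hz0 := neg_of_mul_le_neg_one_div hβ hsmall
        have hsq : (-β) ^ (1 + 1) = β ^ 2 := by ring
        rw [hsq] at hpos
        nlinarith [pow_pos hβ 2]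
      | m + 2 => exact one_le_neg_pow_mul_of_mul_le hβ hgold hsmall (by omega) hpos

lemma add_one_le_sq_of_goldenRatio_le {β : ℝ} (hβ : Real.goldenRatio ≤ β) : β + 1 ≤ β ^ 2 := by
  nlinarith [Real.goldenRatio_sq, Real.one_lt_goldenRatio]

lemma one_mem_Zm {β : ℝ} (hβ : 0 < β) (hgold : β + 1 ≤ β ^ 2) : (1 : ℝ) ∈ Zm β := by
  have hβ1 : 0 < β + 1 := by positivity
  refine ⟨1, ⟨?_, ?_⟩, ?_⟩
  · rw [pow_one, div_neg, neg_div, neg_le_neg_iff, div_le_div_iff₀ hβ hβ1]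
    nlinarith
  · have : 0 < 1 / β := by positivity
    rw [pow_one, div_neg]
    linarith [show 0 < 1 / (β + 1) by positivity]
  · have hfrac : Int.fract (β / (β + 1)) = β / (β + 1) :=
      Int.fract_eq_self.mpr ⟨by positivity, (div_lt_one hβ1).mpr (by linarith)⟩
    rw [pow_one, div_neg, Function.iterate_one, Tm_eq_fract_sub, mul_neg, mul_one_div_cancel hβ.ne',
      sub_neg_eq_add, Int.fract_add_one, hfrac, sub_self]

theorem stmt_14 (β : ℝ) (hβ : (1 + Real.sqrt 5) / 2 ≤ β) :
    IsLeast (Zm β ∩ Set.Ioi (0 : ℝ)) 1 := by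
  have hβ0 : 0 < β := lt_of_lt_of_le (by positivity) hβ
  have hgold : β + 1 ≤ β ^ 2 := add_one_le_sq_of_goldenRatio_le hβ
  refine ⟨⟨one_mem_Zm hβ0 hgold, mem_Ioi.mpr one_pos⟩, ?_⟩
  rintro y ⟨⟨n, hn, h0⟩, hy⟩
  have hne : (-β) ^ n ≠ 0 := pow_ne_zero _ (neg_ne_zero.mpr hβ0.ne')
  have key := one_le_neg_pow_mul_of_iterate_Tm_eq_zero hβ0 hgold n hn h0
  rw [mul_div_cancel₀ y hne] at key
  exact key hy
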